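/- Let w_η(x) = (1/2)(x - η)·∇u_λ(x) + u_λ(x) - λ v_λ(x), where u_λ solves -Δu = λu + |u|u in Ω ⊂ ℝ^6 and v_λ solves -Δv = (λ + 2|u_λ|)v + u_λ in Ω. Then w_η satisfies -Δ w_η = (λ + 2|u_λ|) w_η in Ω, for every η ∈ ℝ^6. -/

import Mathlib

/-!
Write `Z f (x) = f'(x) (x - η)` for the scaling field. Differentiating the equation gives
`Z (Δu) = -(λ + 2|u|) Z u`, and the commutator identity `Δ (Z u) = Z (Δu) + 2 Δu` then shows that
`½ Z u + u` solves the linearized equation `-Δφ = (λ + 2|u|) φ` up to the error `λ u`, which is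
exactly cancelled by `-λ v`.
-/

open scoped BigOperators

/-- The Laplacian on `ℝ^6` as the sum of second partial derivatives. -/
noncomputable def lap (f : EuclideanSpace ℝ (Fin 6) → ℝ)
    (x : EuclideanSpace ℝ (Fin 6)) : ℝ :=
  ∑ i : Fin 6, fderiv ℝ (fun y => fderiv ℝ f y (EuclideanSpace.single i 1)) x
    (EuclideanSpace.single i 1)

open Topology Asymptotics InnerProductSpace Laplacian

section ScalingField

variable {E F : Type*} [NormedAddCommGroup E] [NormedSpace ℝ E]
  [NormedAddCommGroup F] [NormedSpace ℝ F] {u : E → F} {x : E}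

theorem fderiv_fderiv_apply_sub_eventuallyEq (hu : ContDiffAt ℝ 2 u x) (η : E) :
    fderiv ℝ (fun y => fderiv ℝ u y (y - η)) =ᶠ[𝓝 x]
      fun y => fderiv ℝ u y + fderiv ℝ (fderiv ℝ u) y (y - η) := by
  filter_upwards [hu.eventually (by simp)] with y hy
  have hD : DifferentiableAt ℝ (fderiv ℝ u) y :=
    (hy.fderiv_right (m := 1) le_rfl).differentiableAt one_ne_zero
  rw [(hD.hasFDerivAt.clm_apply (hasFDerivAt_sub_const η)).fderiv]
  ext v
  simp only [add_apply, ContinuousLinearMap.comp_apply, ContinuousLinearMap.flip_apply,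
    ContinuousLinearMap.id_apply]
  rw [(hy.isSymmSndFDerivAt (by simp)).eq v (y - η)]

theorem fderiv_fderiv_fderiv_apply_sub_apply (hu : ContDiffAt ℝ 3 u x) (η v : E) :
    fderiv ℝ (fderiv ℝ fun y => fderiv ℝ u y (y - η)) x v v =
      (2 : ℝ) • fderiv ℝ (fderiv ℝ u) x v v
        + fderiv ℝ (fderiv ℝ (fderiv ℝ u)) x (x - η) v v := by
  have hDu : ContDiffAt ℝ 2 (fderiv ℝ u) x := hu.fderiv_right (by norm_num)
  have hD2u : DifferentiableAt ℝ (fderiv ℝ (fderiv ℝ u)) x :=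
    (hDu.fderiv_right (m := 1) le_rfl).differentiableAt one_ne_zero
  rw [(fderiv_fderiv_apply_sub_eventuallyEq (hu.of_le (by norm_num)) η).fderiv_eq,
    ((hDu.differentiableAt (by norm_num)).hasFDerivAt.fun_add
      (hD2u.hasFDerivAt.clm_apply (hasFDerivAt_sub_const η))).fderiv]
  simp only [add_apply, ContinuousLinearMap.comp_apply, ContinuousLinearMap.flip_apply,
    ContinuousLinearMap.id_apply]
  rw [(hDu.isSymmSndFDerivAt (by simp)).eq v (x - η), two_smul, add_assoc]

end ScalingField

theorem hasDerivAt_abs_mul_self (t : ℝ) : HasDerivAt (fun s : ℝ => |s| * s) (2 * |t|) t := by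
  rcases eq_or_ne t 0 with rfl | ht
  · rw [hasDerivAt_iff_isLittleO_nhds_zero]
    have habs : (fun h : ℝ => |h|) =o[𝓝 0] (fun _ => (1 : ℝ)) :=
      isLittleO_one_iff ℝ |>.2 (by simpa using continuous_abs.tendsto (0 : ℝ))
    simpa using habs.mul_isBigO (isBigO_refl (fun h : ℝ => h) (𝓝 0))
  · exact ((hasDerivAt_abs ht).fun_mul (hasDerivAt_id' t)).congr_deriv
      (by rw [sign_mul_self]; ring)

theorem HasFDerivAt.abs_mul_self {E : Type*} [NormedAddCommGroup E] [NormedSpace ℝ E]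
    {f : E → ℝ} {f' : E →L[ℝ] ℝ} {x : E} (hf : HasFDerivAt f f' x) :
    HasFDerivAt (fun y => |f y| * f y) ((2 * |f x|) • f') x :=
  (hasDerivAt_abs_mul_self (f x)).comp_hasFDerivAt x hf

section Laplacian

variable {E F : Type*} [NormedAddCommGroup E] [InnerProductSpace ℝ E] [FiniteDimensional ℝ E]
  [NormedAddCommGroup F] [NormedSpace ℝ F] {u : E → F} {x : E}

theorem laplacian_eq_sum_fderiv_fderiv {ι : Type*} [Fintype ι] (b : OrthonormalBasis ι ℝ E)
    (f : E → F) (x : E) : Δ f x = ∑ i, fderiv ℝ (fderiv ℝ f) x (b i) (b i) := by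
  simp [laplacian_eq_iteratedFDeriv_orthonormalBasis f b, iteratedFDeriv_two_apply]

theorem fderiv_laplacian_apply {ι : Type*} [Fintype ι] (b : OrthonormalBasis ι ℝ E)
    (hu : DifferentiableAt ℝ (fderiv ℝ (fderiv ℝ u)) x) (h : E) :
    fderiv ℝ (Δ u) x h = ∑ i, fderiv ℝ (fderiv ℝ (fderiv ℝ u)) x h (b i) (b i) := by
  rw [funext (laplacian_eq_sum_fderiv_fderiv b u), (HasFDerivAt.fun_sum fun i _ =>
    (hu.hasFDerivAt.clm_apply (hasFDerivAt_const (b i) x)).clm_apply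
      (hasFDerivAt_const (b i) x)).fderiv]
  simp

theorem laplacian_fderiv_apply_sub (hu : ContDiffAt ℝ 3 u x) (η : E) :
    Δ (fun y => fderiv ℝ u y (y - η)) x = fderiv ℝ (Δ u) x (x - η) + (2 : ℝ) • Δ u x := by
  have hD2u : DifferentiableAt ℝ (fderiv ℝ (fderiv ℝ u)) x :=
    ((hu.fderiv_right (m := 2) (by norm_num)).fderiv_right (m := 1) le_rfl).differentiableAt
      one_ne_zero
  let b := stdOrthonormalBasis ℝ E
  simp only [laplacian_eq_sum_fderiv_fderiv b, fderiv_fderiv_fderiv_apply_sub_apply hu,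
    fderiv_laplacian_apply b hD2u, Finset.sum_add_distrib, Finset.smul_sum, add_comm]

theorem fderiv_laplacian_of_neg_laplacian_eq {u : E → ℝ} {lam : ℝ}
    (hu : DifferentiableAt ℝ u x) (h : ∀ᶠ y in 𝓝 x, -Δ u y = lam * u y + |u y| * u y) :
    fderiv ℝ (Δ u) x = -((lam + 2 * |u x|) • fderiv ℝ u x) := by
  have hΔu : Δ u =ᶠ[𝓝 x] fun y => -(lam * u y + |u y| * u y) :=
    h.mono fun y hy => by linarith
  rw [hΔu.fderiv_eq, ((hu.hasFDerivAt.const_mul lam).fun_add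
    hu.hasFDerivAt.abs_mul_self).fun_neg.fderiv, add_smul]

theorem laplacian_smul_add_sub {f g h : E → ℝ} (hf : ContDiffAt ℝ 2 f x)
    (hg : ContDiffAt ℝ 2 g x) (hh : ContDiffAt ℝ 2 h x) (a b : ℝ) :
    Δ (a • f + g - b • h) x = a * Δ f x + Δ g x - b * Δ h x := by
  have haf : ContDiffAt ℝ 2 (a • f) x := hf.const_smul a
  have hbh : ContDiffAt ℝ 2 (b • h) x := hh.const_smul b
  have hafg : ContDiffAt ℝ 2 (a • f + g) x := haf.add hg
  rw [hafg.laplacian_sub hbh, haf.laplacian_add hg, laplacian_smul a hf,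
    laplacian_smul b hh, smul_eq_mul, smul_eq_mul]

end Laplacian

theorem lap_eq_laplacian {f : EuclideanSpace ℝ (Fin 6) → ℝ} {x : EuclideanSpace ℝ (Fin 6)}
    (hf : ContDiffAt ℝ 2 f x) : lap f x = Δ f x := by
  have hD : DifferentiableAt ℝ (fderiv ℝ f) x :=
    (hf.fderiv_right (m := 1) le_rfl).differentiableAt one_ne_zero
  simp [lap, laplacian_eq_sum_fderiv_fderiv (EuclideanSpace.basisFun (Fin 6) ℝ),
    fderiv_clm_apply hD (differentiableAt_const _)]

theorem w_eta_equation_general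
    (Ω : Set (EuclideanSpace ℝ (Fin 6))) (hΩo : IsOpen Ω)
    (lam : ℝ)
    (u v : EuclideanSpace ℝ (Fin 6) → ℝ)
    (hureg : ContDiffOn ℝ 3 u Ω) (hvreg : ContDiffOn ℝ 2 v Ω)
    (hueq : ∀ x ∈ Ω, -lap u x = lam * u x + |u x| * u x)
    (hveq : ∀ x ∈ Ω, -lap v x = (lam + 2 * |u x|) * v x + u x)
    (η : EuclideanSpace ℝ (Fin 6))
    (w : EuclideanSpace ℝ (Fin 6) → ℝ)
    (hw : ∀ x, w x = (1 / 2 : ℝ) * fderiv ℝ u x (x - η) + u x - lam * v x) :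
    ∀ x ∈ Ω, -lap w x = (lam + 2 * |u x|) * w x := by
  intro x hx
  have hu : ContDiffAt ℝ 3 u x := hureg.contDiffAt (hΩo.mem_nhds hx)
  have hu₂ : ContDiffAt ℝ 2 u x := hu.of_le (by norm_num)
  have hv : ContDiffAt ℝ 2 v x := hvreg.contDiffAt (hΩo.mem_nhds hx)
  have hZu : ContDiffAt ℝ 2 (fun y => fderiv ℝ u y (y - η)) x :=
    (hu.fderiv_right (m := 2) (by norm_num)).clm_apply (contDiffAt_id.sub contDiffAt_const)
  have hw' : w = (1 / 2 : ℝ) • (fun y => fderiv ℝ u y (y - η)) + u - lam • v :=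
    funext fun y => by simp [hw]
  have hw₂ : ContDiffAt ℝ 2 w x := by
    rw [hw']; exact ((hZu.const_smul (1 / 2 : ℝ)).add hu₂).sub (hv.const_smul lam)
  have hΔu_grad : fderiv ℝ (Δ u) x = -((lam + 2 * |u x|) • fderiv ℝ u x) := by
    refine fderiv_laplacian_of_neg_laplacian_eq (hu.differentiableAt (by norm_num)) ?_
    filter_upwards [hΩo.mem_nhds hx] with y hy
    rw [← lap_eq_laplacian ((hureg.contDiffAt (hΩo.mem_nhds hy)).of_le (by norm_num)), hueq y hy]
  have hU := lap_eq_laplacian hu₂ ▸ hueq x hx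
  have hV := lap_eq_laplacian hv ▸ hveq x hx
  rw [lap_eq_laplacian hw₂, hw', laplacian_smul_add_sub hZu hu₂ hv, laplacian_fderiv_apply_sub hu,
    hΔu_grad, ← hw']
  simp only [neg_apply, smul_apply, smul_eq_mul, hw x]
  linear_combination 2 * hU - lam * hV

/-- If `u_λ` solves `-Δu = λu + |u|u` and `v_λ` solves `-Δv = (λ + 2|u_λ|)v + u_λ`
in `Ω ⊂ ℝ^6`, then for every `η ∈ ℝ^6` the function
`w_η(x) = (1/2)(x-η)·∇u_λ(x) + u_λ(x) - λ v_λ(x)` satisfies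
`-Δw_η = (λ + 2|u_λ|) w_η` in `Ω`. -/
theorem w_eta_equation
    (Ω : Set (EuclideanSpace ℝ (Fin 6))) (hΩo : IsOpen Ω)
    (lam : ℝ) (hlam : 0 < lam)
    (u v : EuclideanSpace ℝ (Fin 6) → ℝ)
    (hureg : ContDiffOn ℝ 3 u Ω) (hvreg : ContDiffOn ℝ 2 v Ω)
    (hueq : ∀ x ∈ Ω, -lap u x = lam * u x + |u x| * u x)
    (hveq : ∀ x ∈ Ω, -lap v x = (lam + 2 * |u x|) * v x + u x)
    (η : EuclideanSpace ℝ (Fin 6))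
    (w : EuclideanSpace ℝ (Fin 6) → ℝ)
    (hw : ∀ x, w x = (1 / 2 : ℝ) * fderiv ℝ u x (x - η) + u x - lam * v x) :
    ∀ x ∈ Ω, -lap w x = (lam + 2 * |u x|) * w x :=
  w_eta_equation_general Ω hΩo lam u v hureg hvreg hueq hveq η w hw
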